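/- arXiv:2111.10120 — 3 statements merged into one kernel-verified Lean document; each statement's English description precedes it below -/
import Mathlib

section
/- For the first-order virial EOS, the Mayer-type relation C_p = C_v + R(1+aρ)²/(1+2aρ) holds, where C_p = (∂h/∂T)_P with h(P,T) = C_v·T + 2aP/(−1+√(1+4aP/(RT))) + q, evaluated at ρ given by ρ = (−1+√(1+4aP/(RT)))/(2a). -/
/-!
At fixed pressure the enthalpy is `h = C_v T + P / ρ(T) + q`, where `ρ(T)` is the positive
root of the quadratic `P = ρ R T (1 + a ρ)`; indeed `√(1 + 4aP/(RT)) = 1 + 2aρ`. Differentiating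
the equation of state gives `ρ' = -ρ (1 + aρ) / (T (1 + 2aρ))`, and then
`(P / ρ)' = -P ρ' / ρ² = R (1 + aρ)² / (1 + 2aρ)`.
-/

open Real

noncomputable def vo1Density (a R P T : ℝ) : ℝ :=
  (-1 + √(1 + 4 * a * P / (R * T))) / (2 * a)

section

variable {a R P T ρ : ℝ}

theorem vo1_discriminant_eq_sq (hR : R ≠ 0) (hT : T ≠ 0)
    (hEOS : P = ρ * R * T * (1 + a * ρ)) :
    1 + 4 * a * P / (R * T) = (1 + 2 * a * ρ) ^ 2 := by
  rw [hEOS]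
  field_simp
  ring

theorem sqrt_vo1_discriminant (hR : R ≠ 0) (hT : T ≠ 0) (hρ : 0 ≤ 1 + 2 * a * ρ)
    (hEOS : P = ρ * R * T * (1 + a * ρ)) :
    √(1 + 4 * a * P / (R * T)) = 1 + 2 * a * ρ := by
  rw [vo1_discriminant_eq_sq hR hT hEOS, sqrt_sq hρ]

theorem vo1Density_eq (ha : a ≠ 0) (hR : R ≠ 0) (hT : T ≠ 0) (hρ : 0 ≤ 1 + 2 * a * ρ)
    (hEOS : P = ρ * R * T * (1 + a * ρ)) :
    vo1Density a R P T = ρ := by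
  rw [vo1Density, sqrt_vo1_discriminant hR hT hρ hEOS]
  field_simp
  ring

theorem hasDerivAt_vo1Density (ha : a ≠ 0) (hR : R ≠ 0) (hT : T ≠ 0)
    (hρ : 0 < 1 + 2 * a * ρ) (hEOS : P = ρ * R * T * (1 + a * ρ)) :
    HasDerivAt (vo1Density a R P) (-ρ * (1 + a * ρ) / (T * (1 + 2 * a * ρ))) T := by
  have hRT : R * T ≠ 0 := mul_ne_zero hR hT
  have hsqrt := sqrt_vo1_discriminant hR hT hρ.le hEOS
  have hRt : HasDerivAt (fun t : ℝ => R * t) R T := by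
    simpa using (hasDerivAt_id T).const_mul R
  have hdisc : HasDerivAt (fun t : ℝ => 1 + 4 * a * P / (R * t))
      (-(4 * a * P * R) / (R * T) ^ 2) T := by
    simpa using ((hasDerivAt_const T (4 * a * P)).div hRt hRT).const_add 1
  have hroot := ((hdisc.sqrt (by rw [vo1_discriminant_eq_sq hR hT hEOS]; positivity)
    ).const_add (-1)).div_const (2 * a)
  refine hroot.congr_deriv ?_
  rw [hsqrt, hEOS]
  field_simp
  ring

end

theorem vo1_mayer_general (a R Cv q : ℝ) (ha : 0 < a) (hR : 0 < R)
    (P T ρ : ℝ) (hT : 0 < T) (hρ : 0 < ρ)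
    (hEOS : P = ρ * R * T * (1 + a * ρ)) :
    deriv (fun T' : ℝ =>
        Cv * T' + 2 * a * P / (-1 + Real.sqrt (1 + 4 * a * P / (R * T'))) + q) T
      = Cv + R * (1 + a * ρ) ^ 2 / (1 + 2 * a * ρ) := by
  have h2aρ : 0 < 1 + 2 * a * ρ := by positivity
  have henthalpy : (fun T' : ℝ =>
      Cv * T' + 2 * a * P / (-1 + Real.sqrt (1 + 4 * a * P / (R * T'))) + q) =
      fun T' => Cv * T' + P / vo1Density a R P T' + q := by
    funext T'
    rw [vo1Density, div_div_eq_mul_div, mul_comm P]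
  have hdens := vo1Density_eq ha.ne' hR.ne' hT.ne' h2aρ.le hEOS
  have hderiv := hasDerivAt_vo1Density ha.ne' hR.ne' hT.ne' h2aρ hEOS
  have henthalpy_deriv : HasDerivAt (fun T' => Cv * T' + P / vo1Density a R P T' + q)
      (Cv * 1 + (0 * vo1Density a R P T - P * (-ρ * (1 + a * ρ) / (T * (1 + 2 * a * ρ)))) /
        vo1Density a R P T ^ 2) T :=
    (((hasDerivAt_id T).const_mul Cv).add
      ((hasDerivAt_const T P).div hderiv (by rw [hdens]; positivity))).add_const q
  rw [henthalpy, henthalpy_deriv.deriv, hdens, hEOS]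
  field_simp
  ring

/-- Mayer-type relation for VO1 EOS: C_p = C_v + R(1+aρ)²/(1+2aρ). -/
theorem vo1_mayer (a R Cv q : ℝ) (ha : 0 < a) (hR : 0 < R) (hCv : 0 < Cv)
    (P T ρ : ℝ) (hP : 0 < P) (hT : 0 < T) (hρ : 0 < ρ)
    (hEOS : P = ρ * R * T * (1 + a * ρ)) :
    deriv (fun T' : ℝ =>
        Cv * T' + 2 * a * P / (-1 + Real.sqrt (1 + 4 * a * P / (R * T'))) + q) T
      = Cv + R * (1 + a * ρ) ^ 2 / (1 + 2 * a * ρ) :=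
  vo1_mayer_general a R Cv q ha hR P T ρ hT hρ hEOS
end

section
/- For the VO1 entropy s(P,T) = −(R/2)[√(1+4aP/(RT)) + 2·ln(−1+√(1+4aP/(RT)))] + C_v·ln T + q′, the partial derivative satisfies (∂s/∂P)_T = (1/ρ²)(∂ρ/∂T)_P, where ρ(P,T) = (−1+√(1+4aP/(RT)))/(2a); i.e. the Maxwell relation (∂s/∂P)_T = −(∂v/∂T)_P holds with v = 1/ρ. -/
/-- The VO1 entropy satisfies the Maxwell relation (∂s/∂P)_T = −(∂v/∂T)_P,
    with v = 1/ρ and ρ(P,T) = (−1+√(1+4aP/(RT)))/(2a). -/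
theorem vo1_entropy_maxwell (a R Cv q' : ℝ) (ha : 0 < a) (hR : 0 < R) (hCv : 0 < Cv)
    (P T : ℝ) (hP : 0 < P) (hT : 0 < T) :
    deriv (fun P' : ℝ =>
        -(R / 2) * (Real.sqrt (1 + 4 * a * P' / (R * T))
            + 2 * Real.log (-1 + Real.sqrt (1 + 4 * a * P' / (R * T))))
          + Cv * Real.log T + q') P
      = -deriv (fun T' : ℝ =>
          1 / ((-1 + Real.sqrt (1 + 4 * a * P / (R * T'))) / (2 * a))) T := by
  have hRT : (0:ℝ) < R * T := mul_pos hR hT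
  have hfrac : 0 < 4 * a * P / (R * T) := by positivity
  set u : ℝ := 1 + 4 * a * P / (R * T) with hu_def
  have hu : 0 < u := by positivity
  have hu1 : 1 < u := by simp [hu_def]; linarith
  set s : ℝ := Real.sqrt u with hs_def
  have hs1 : 1 < s := by
    rw [hs_def]
    rw [show (1:ℝ) = Real.sqrt 1 by simp]
    exact Real.sqrt_lt_sqrt (by norm_num) hu1
  have hs0 : 0 < s := lt_trans one_pos hs1
  have hs2 : s ^ 2 = u := Real.sq_sqrt hu.le
  -- LHS derivative
  have h1 : HasDerivAt (fun P' : ℝ => 1 + 4 * a * P' / (R * T)) (4 * a / (R * T)) P := by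
    have := (((hasDerivAt_id P).const_mul (4 * a)).div_const (R * T)).const_add 1
    simpa [mul_comm, mul_assoc, mul_left_comm] using this
  have h2 : HasDerivAt (fun P' : ℝ => Real.sqrt (1 + 4 * a * P' / (R * T)))
      ((4 * a / (R * T)) / (2 * s)) P := by
    have := h1.sqrt hu.ne'
    simpa [hs_def, hu_def] using this
  have h3 : HasDerivAt (fun P' : ℝ => -1 + Real.sqrt (1 + 4 * a * P' / (R * T)))
      ((4 * a / (R * T)) / (2 * s)) P := h2.const_add (-1)
  have hne3 : (-1 + s) ≠ 0 := by linarith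
  have h4 := h3.log hne3
  have hL : HasDerivAt (fun P' : ℝ =>
      -(R / 2) * (Real.sqrt (1 + 4 * a * P' / (R * T))
          + 2 * Real.log (-1 + Real.sqrt (1 + 4 * a * P' / (R * T))))
        + Cv * Real.log T + q')
      (-(R / 2) * ((4 * a / (R * T)) / (2 * s)
          + 2 * ((4 * a / (R * T)) / (2 * s) / (-1 + s)))) P := by
    exact (((h2.add (h4.const_mul 2)).const_mul (-(R/2))).add_const (Cv * Real.log T)).add_const q'
  -- RHS derivative
  have hd1 : HasDerivAt (fun T' : ℝ => R * T') R T := by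
    simpa using (hasDerivAt_id T).const_mul R
  have hd2 : HasDerivAt (fun T' : ℝ => 4 * a * P / (R * T'))
      ((0 * (R * T) - 4 * a * P * R) / (R * T) ^ 2) T :=
    (hasDerivAt_const T (4 * a * P)).div hd1 hRT.ne'
  have hd3 : HasDerivAt (fun T' : ℝ => 1 + 4 * a * P / (R * T'))
      ((0 * (R * T) - 4 * a * P * R) / (R * T) ^ 2) T := hd2.const_add 1
  have hd4 : HasDerivAt (fun T' : ℝ => Real.sqrt (1 + 4 * a * P / (R * T')))
      (((0 * (R * T) - 4 * a * P * R) / (R * T) ^ 2) / (2 * s)) T := by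
    have := hd3.sqrt hu.ne'
    simpa [hs_def, hu_def] using this
  have hd5 : HasDerivAt (fun T' : ℝ => (-1 + Real.sqrt (1 + 4 * a * P / (R * T'))) / (2 * a))
      ((((0 * (R * T) - 4 * a * P * R) / (R * T) ^ 2) / (2 * s)) / (2 * a)) T :=
    (hd4.const_add (-1)).div_const (2 * a)
  have hden : (-1 + s) / (2 * a) ≠ 0 := by
    apply div_ne_zero hne3 (by positivity)
  have hR6 : HasDerivAt (fun T' : ℝ => 1 / ((-1 + Real.sqrt (1 + 4 * a * P / (R * T'))) / (2 * a)))
      ((0 * ((-1 + s) / (2 * a)) - 1 * ((((0 * (R * T) - 4 * a * P * R) / (R * T) ^ 2) / (2 * s)) / (2 * a)))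
        / (((-1 + s) / (2 * a)) ^ 2)) T := by
    have := (hasDerivAt_const T (1:ℝ)).div hd5 hden
    simpa [hs_def, hu_def, Pi.div_def] using this
  rw [hL.deriv, hR6.deriv]
  have hPform : 4 * a * P = R * T * (s ^ 2 - 1) := by
    rw [hs2, hu_def]; field_simp; ring
  field_simp
  linear_combination 4 * hPform
end

section
/- For the MVO1 mixture, the map P ↦ Σ_{k=1}^N 2a_kY_k/(−1 + √(1 + 4a_kC_{v,k}P/(R_k(e_k − q_k)))) is strictly decreasing on (0,∞) and tends to +∞ as P → 0⁺ and to 0 as P → ∞; hence for every v_mix > 0 the implicit MVO1 thermal EOS 1/ρ_mix = Σ_k 2a_kY_k/(−1 + √(1 + 4a_kP/(R_kT))) has a unique positive solution P. -/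
open Finset Filter

private lemma mvo1_den_pos {c P : ℝ} (hc : 0 < c) (hP : 0 < P) :
    0 < -1 + Real.sqrt (1 + c * P) := by
  have h1 : (1:ℝ) < Real.sqrt (1 + c * P) := by
    have := Real.sqrt_lt_sqrt (le_refl (0:ℝ) |>.trans (by norm_num : (0:ℝ) ≤ 1))
      (by nlinarith : (1:ℝ) < 1 + c * P)
    simpa [Real.sqrt_one] using this
  linarith

private lemma mvo1_term_anti {b c : ℝ} (hb : 0 < b) (hc : 0 < c) {x y : ℝ}
    (hx : 0 < x) (hxy : x < y) :
    b / (-1 + Real.sqrt (1 + c * y)) < b / (-1 + Real.sqrt (1 + c * x)) := by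
  have hgx := mvo1_den_pos hc hx
  have hlt : -1 + Real.sqrt (1 + c * x) < -1 + Real.sqrt (1 + c * y) := by
    have := Real.sqrt_lt_sqrt (by nlinarith) (by nlinarith : 1 + c * x < 1 + c * y)
    linarith
  exact div_lt_div_of_pos_left hb hgx hlt

private lemma mvo1_term_cont {b c : ℝ} (hc : 0 < c) :
    ContinuousOn (fun P => b / (-1 + Real.sqrt (1 + c * P))) (Set.Ioi 0) := by
  apply ContinuousOn.div continuousOn_const
  · exact Continuous.continuousOn (by continuity)
  · intro P hP
    exact ne_of_gt (mvo1_den_pos hc hP)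

private lemma mvo1_term_tendsto_zero {b c : ℝ} (hb : 0 < b) (hc : 0 < c) :
    Tendsto (fun P => b / (-1 + Real.sqrt (1 + c * P)))
      (nhdsWithin 0 (Set.Ioi 0)) atTop := by
  have hg : Tendsto (fun P => -1 + Real.sqrt (1 + c * P)) (nhdsWithin 0 (Set.Ioi 0))
      (nhdsWithin 0 (Set.Ioi 0)) := by
    apply tendsto_nhdsWithin_of_tendsto_nhds_of_eventually_within
    · have hcont : Continuous (fun P : ℝ => -1 + Real.sqrt (1 + c * P)) := by continuity
      have h0 : (fun P : ℝ => -1 + Real.sqrt (1 + c * P)) 0 = 0 := by simp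
      simpa [h0] using (hcont.tendsto 0).mono_left nhdsWithin_le_nhds
    · filter_upwards [self_mem_nhdsWithin] with P hP
      exact mvo1_den_pos hc hP
  have h := (tendsto_inv_nhdsGT_zero.comp hg).const_mul_atTop hb
  simpa [div_eq_mul_inv, Function.comp] using h

private lemma mvo1_term_tendsto_inf {b c : ℝ} (hc : 0 < c) :
    Tendsto (fun P => b / (-1 + Real.sqrt (1 + c * P))) atTop (nhds 0) := by
  apply Tendsto.div_atTop tendsto_const_nhds
  have h1 : Tendsto (fun P : ℝ => 1 + c * P) atTop atTop :=
    tendsto_atTop_add_const_left _ _ (Tendsto.const_mul_atTop hc tendsto_id)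
  have hsq : Tendsto Real.sqrt atTop atTop := by
    apply tendsto_atTop_atTop.2
    intro B
    refine ⟨max (B ^ 2) 0, fun x hx => ?_⟩
    rcases le_or_gt B 0 with h | h
    · exact h.trans (Real.sqrt_nonneg x)
    · rw [show B = Real.sqrt (B ^ 2) from (Real.sqrt_sq h.le).symm]
      exact Real.sqrt_le_sqrt (le_trans (le_max_left _ _) hx)
  have h2 : Tendsto (fun P : ℝ => Real.sqrt (1 + c * P)) atTop atTop :=
    hsq.comp h1
  exact tendsto_atTop_add_const_left _ _ h2

open Finset in
/-- The MVO1 implicit thermal EOS: the map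
    P ↦ Σ_k 2a_kY_k/(−1+√(1+4a_kP/(R_kT))) is strictly decreasing on (0,∞),
    tends to +∞ as P → 0⁺ and to 0 as P → ∞; hence for every target mixture
    specific volume w > 0 there is a unique positive solution P. -/
theorem mvo1_unique_pressure (N : ℕ) (hN : 0 < N) (a R Y : Fin N → ℝ) (T : ℝ)
    (ha : ∀ k, 0 < a k) (hR : ∀ k, 0 < R k) (hY : ∀ k, 0 < Y k) (hT : 0 < T) :
    let f : ℝ → ℝ := fun P =>
      ∑ k, 2 * a k * Y k / (-1 + Real.sqrt (1 + 4 * a k * P / (R k * T)))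
    StrictAntiOn f (Set.Ioi 0) ∧
    Filter.Tendsto f (nhdsWithin 0 (Set.Ioi 0)) Filter.atTop ∧
    Filter.Tendsto f Filter.atTop (nhds 0) ∧
    ∀ w : ℝ, 0 < w → ∃! P : ℝ, 0 < P ∧ f P = w := by
  intro f
  haveI : Nonempty (Fin N) := Fin.pos_iff_nonempty.mp hN
  set b : Fin N → ℝ := fun k => 2 * a k * Y k with hbdef
  set c : Fin N → ℝ := fun k => 4 * a k / (R k * T) with hcdef
  have hb : ∀ k, 0 < b k := fun k => by have := ha k; have := hY k; positivity
  have hc : ∀ k, 0 < c k := fun k => by have := ha k; have := hR k; positivity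
  have hfe : f = fun P => ∑ k, b k / (-1 + Real.sqrt (1 + c k * P)) := by
    funext P
    refine Finset.sum_congr rfl fun k _ => ?_
    rw [hbdef, hcdef]
    rw [show 4 * a k * P / (R k * T) = (4 * a k / (R k * T)) * P from by ring]
  rw [hfe]
  -- strict antitone
  have hanti : StrictAntiOn (fun P => ∑ k, b k / (-1 + Real.sqrt (1 + c k * P)))
      (Set.Ioi 0) := by
    intro x hx y hy hxy
    exact Finset.sum_lt_sum_of_nonempty univ_nonempty
      (fun k _ => mvo1_term_anti (hb k) (hc k) hx hxy)
  -- tendsto atTop at 0+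
  have htend0 : Tendsto (fun P => ∑ k, b k / (-1 + Real.sqrt (1 + c k * P)))
      (nhdsWithin 0 (Set.Ioi 0)) atTop := by
    set k0 : Fin N := Classical.arbitrary (Fin N)
    apply tendsto_atTop_mono' _ _ (mvo1_term_tendsto_zero (hb k0) (hc k0))
    filter_upwards [self_mem_nhdsWithin] with P hP
    exact Finset.single_le_sum
      (fun k _ => le_of_lt (div_pos (hb k) (mvo1_den_pos (hc k) hP)))
      (Finset.mem_univ k0)
  -- tendsto 0 at atTop
  have htendInf : Tendsto (fun P => ∑ k, b k / (-1 + Real.sqrt (1 + c k * P)))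
      atTop (nhds 0) := by
    have := tendsto_finset_sum Finset.univ
      (fun k _ => mvo1_term_tendsto_inf (b := b k) (hc k))
    simpa using this
  have hcont : ContinuousOn (fun P => ∑ k, b k / (-1 + Real.sqrt (1 + c k * P)))
      (Set.Ioi 0) :=
    continuousOn_finset_sum _ (fun k _ => mvo1_term_cont (hc k))
  refine ⟨hanti, htend0, htendInf, ?_⟩
  intro w hw
  set g : ℝ → ℝ := fun P => ∑ k, b k / (-1 + Real.sqrt (1 + c k * P))
  -- find P₁ with g P₁ ≥ w
  obtain ⟨P₁, hP₁, hgP₁⟩ : ∃ P₁, 0 < P₁ ∧ w ≤ g P₁ := by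
    have h := (htend0.eventually_ge_atTop w).and self_mem_nhdsWithin
    obtain ⟨P₁, h1, h2⟩ := h.exists
    exact ⟨P₁, h2, h1⟩
  -- find P₂ with g P₂ < w
  obtain ⟨M, hM⟩ : ∃ M, ∀ P ≥ M, g P < w := by
    have h := (tendsto_order.mp htendInf).2 w hw
    exact eventually_atTop.mp h
  set P₂ : ℝ := max M (P₁ + 1) with hP₂def
  have hP₁₂ : P₁ < P₂ := lt_of_lt_of_le (by linarith) (le_max_right _ _)
  have hP₂pos : 0 < P₂ := hP₁.trans hP₁₂
  have hgP₂ : g P₂ < w := hM P₂ (le_max_left _ _)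
  have hsub : Set.Icc P₁ P₂ ⊆ Set.Ioi 0 := fun x hx => lt_of_lt_of_le hP₁ hx.1
  have hivt : Set.Icc (g P₂) (g P₁) ⊆ g '' Set.Icc P₁ P₂ :=
    intermediate_value_Icc' (le_of_lt hP₁₂) (hcont.mono hsub)
  obtain ⟨P, hPmem, hPval⟩ := hivt ⟨le_of_lt hgP₂, hgP₁⟩
  refine ⟨P, ⟨hsub hPmem, hPval⟩, ?_⟩
  rintro Q ⟨hQpos, hQval⟩
  exact hanti.injOn hQpos (hsub hPmem) (by rw [hQval, hPval])
end
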